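/- For every integer n ≥ 1 and every x ∈ (0, π), the following two inequalities hold: ln((sin x)/x) < − ∑_{k=1}^{n} (2^{2k−1} · |B_{2k}| / (k · (2k)!)) · x^{2k}, and ∑_{k=1}^{n} ((2^{2k} − 1) · |B_{2k}| / (2k · (2k)!)) · x^{2k} < − ln(cos(x/2)). -/

import Mathlib

open Real

open Finset Filter Topology in

private theorem tailT (n : ℕ) {r : ℝ} (h0 : 0 ≤ r) (h1 : r < 1) :
    HasSum (fun j : ℕ => r ^ (j + n + 1) / ((j : ℝ) + n + 1))
      (-Real.log (1 - r) - ∑ k ∈ Finset.Icc 1 n, r ^ k / (k : ℝ)) := by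
  have habs : |r| < 1 := by rw [abs_of_nonneg h0]; exact h1
  have h := hasSum_pow_div_log_of_abs_lt_one habs
  have hsum : ∑ i ∈ Finset.range n, r ^ (i + 1) / ((i : ℝ) + 1)
      = ∑ k ∈ Finset.Icc 1 n, r ^ k / (k : ℝ) := by
    rw [← Finset.Ico_add_one_right_eq_Icc, Finset.sum_Ico_eq_sum_range]
    simp only [Nat.add_sub_cancel]
    refine Finset.sum_congr rfl fun i _ => ?_
    push_cast
    ring_nf
  have h2 : HasSum (fun j : ℕ => r ^ (j + n + 1) / (((j + n : ℕ) : ℝ) + 1))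
      (-Real.log (1 - r) - ∑ k ∈ Finset.Icc 1 n, r ^ k / (k : ℝ)) := by
    refine (hasSum_nat_add_iff (f := fun j : ℕ => r ^ (j + 1) / ((j : ℝ) + 1)) n).2 ?_
    rw [hsum, sub_add_cancel]
    exact h
  convert h2 using 2 with j
  push_cast
  ring_nf

open Finset Filter Topology in
private theorem Tpos (n : ℕ) {r : ℝ} (h0 : 0 < r) (h1 : r < 1) :
    ∑ k ∈ Finset.Icc 1 n, r ^ k / (k : ℝ) < -Real.log (1 - r) := by
  have h := tailT n h0.le h1
  have h0' : (0 : ℝ) < -Real.log (1 - r) - ∑ k ∈ Finset.Icc 1 n, r ^ k / (k : ℝ) := by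
    refine hasSum_lt (f := fun _ : ℕ => (0 : ℝ)) (i := 0) (fun j => ?_) ?_ hasSum_zero h
    · positivity
    · positivity
  linarith

open Finset Filter Topology in
private theorem Tmono (n : ℕ) {s r : ℝ} (hs : 0 ≤ s) (hsr : s < r) (h1 : r < 1) :
    -Real.log (1 - s) - ∑ k ∈ Finset.Icc 1 n, s ^ k / (k : ℝ) <
      -Real.log (1 - r) - ∑ k ∈ Finset.Icc 1 n, r ^ k / (k : ℝ) := by
  refine hasSum_lt (i := 0) (fun j => ?_) ?_ (tailT n hs (hsr.trans h1)) (tailT n (hs.trans hsr.le) h1)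
  · gcongr

  · have hp : s ^ (0 + n + 1) < r ^ (0 + n + 1) := pow_lt_pow_left₀ hsr hs (by omega)
    have hd : (0:ℝ) < (0 : ℕ) + (n : ℝ) + 1 := by positivity
    exact div_lt_div_of_pos_right hp hd

open Finset Filter Topology in
private theorem euler_log {x : ℝ} (hx : x ∈ Set.Ioo (0 : ℝ) π) :
    HasSum (fun j : ℕ => -Real.log (1 - (x / π) ^ 2 / ((j : ℝ) + 1) ^ 2))
      (-Real.log (Real.sin x / x)) := by
  have hπ : (0:ℝ) < π := pi_pos
  have hx0 : 0 < x := hx.1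
  have hxπ : x < π := hx.2
  set y : ℝ := x / π with hy
  have hy0 : 0 < y := div_pos hx0 hπ
  have hy1 : y < 1 := (div_lt_one hπ).2 hxπ
  have hy2 : y ^ 2 < 1 := by nlinarith
  set r : ℕ → ℝ := fun j => y ^ 2 / ((j : ℝ) + 1) ^ 2 with hr
  have hrpos : ∀ j : ℕ, 0 < r j := fun j => by positivity
  have hrle : ∀ j : ℕ, r j ≤ y ^ 2 := by
    intro j
    apply div_le_self (by positivity)
    have h0 : (0:ℝ) ≤ (j:ℝ) := Nat.cast_nonneg j
    nlinarith
  have hrlt1 : ∀ j : ℕ, r j < 1 := fun j => lt_of_le_of_lt (hrle j) hy2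
  have h1r : ∀ j : ℕ, 0 < 1 - r j := fun j => by linarith [hrlt1 j]
  set f : ℕ → ℝ := fun j => -Real.log (1 - r j) with hf
  have hfnn : ∀ j, 0 ≤ f j := by
    intro j
    have := Real.log_nonpos (x := 1 - r j) (by linarith [h1r j]) (by linarith [hrpos j])
    simp only [hf]
    linarith
  have hfle : ∀ j, f j ≤ (y ^ 2 / (1 - y ^ 2)) * (1 / ((j : ℝ) + 1) ^ 2) := by
    intro j
    have h2 : -Real.log (1 - r j) ≤ r j / (1 - r j) := by
      have h3 := Real.log_le_sub_one_of_pos (inv_pos.2 (h1r j))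
      rw [Real.log_inv] at h3
      have : (1 - r j)⁻¹ - 1 = r j / (1 - r j) := by
        rw [eq_div_iff (ne_of_gt (h1r j)), sub_mul, inv_mul_cancel₀ (ne_of_gt (h1r j))]
        ring
      linarith
    have h4 : r j / (1 - r j) ≤ r j / (1 - y ^ 2) := by
      apply div_le_div_of_nonneg_left (hrpos j).le (by linarith) (by linarith [hrle j])
    have h5 : r j / (1 - y ^ 2) = (y ^ 2 / (1 - y ^ 2)) * (1 / ((j : ℝ) + 1) ^ 2) := by
      rw [hr]; field_simp
    calc f j ≤ r j / (1 - r j) := h2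
      _ ≤ r j / (1 - y ^ 2) := h4
      _ = _ := by rw [h5]
  have hbase : Summable (fun j : ℕ => 1 / ((j : ℝ) + 1) ^ 2) := by
    have h0 : Summable (fun n : ℕ => 1 / (n : ℝ) ^ 2) :=
      summable_one_div_nat_pow.mpr (by norm_num)
    have := (summable_nat_add_iff 1).2 h0
    refine this.congr fun j => ?_
    push_cast
    ring_nf
  have hS : Summable f :=
    Summable.of_nonneg_of_le hfnn hfle (hbase.mul_left _)
  -- Euler product limit
  have hE := Real.tendsto_euler_sin_prod y
  have hxy : π * y = x := by rw [hy]; field_simp [hπ.ne']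
  rw [hxy] at hE
  have hx_ne : x ≠ 0 := ne_of_gt hx0
  have hTP : Tendsto (fun N : ℕ => ∏ j ∈ Finset.range N, (1 - r j)) atTop
      (𝓝 (Real.sin x / x)) := by
    have := hE.div_const x
    refine this.congr fun N => ?_
    rw [mul_comm x, mul_div_assoc, div_self hx_ne, mul_one]
  have hsinpos : 0 < Real.sin x / x := div_pos (Real.sin_pos_of_pos_of_lt_pi hx0 hxπ) hx0
  have hlog : Tendsto (fun N : ℕ => ∑ j ∈ Finset.range N, Real.log (1 - r j)) atTop
      (𝓝 (Real.log (Real.sin x / x))) := by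
    have hcont := (Real.continuousAt_log (ne_of_gt hsinpos)).tendsto.comp hTP
    refine hcont.congr fun N => ?_
    rw [Function.comp_apply, Real.log_prod]
    exact fun j _ => ne_of_gt (h1r j)
  -- identify tsum
  have hg : Summable (fun j => Real.log (1 - r j)) := by
    have := hS.neg
    refine this.congr fun j => ?_
    simp [hf]
  have heq : ∑' j, Real.log (1 - r j) = Real.log (Real.sin x / x) :=
    tendsto_nhds_unique hg.hasSum.tendsto_sum_nat hlog
  have := hg.hasSum.neg
  rw [heq] at this
  exact this

open Finset Filter Topology in
private theorem bern_abs {k : ℕ} (hk : 1 ≤ k) :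
    |(bernoulli (2 * k) : ℝ)| = (-1 : ℝ) ^ (k + 1) * (bernoulli (2 * k) : ℝ) := by
  have hZ := hasSum_zeta_nat (k := k) (by omega)
  set Z : ℝ := (-1 : ℝ) ^ (k + 1) * (2 : ℝ) ^ (2 * k - 1) * π ^ (2 * k) *
      (bernoulli (2 * k) : ℝ) / ((2 * k).factorial : ℝ) with hZdef
  have hge : (1 : ℝ) ≤ Z := by
    have := le_hasSum hZ 1 (fun j _ => by positivity)
    simpa using this
  set u : ℝ := (-1 : ℝ) ^ (k + 1) * (bernoulli (2 * k) : ℝ) with hu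
  have hZu : Z = ((2:ℝ) ^ (2 * k - 1) * π ^ (2 * k) / ((2 * k).factorial : ℝ)) * u := by
    rw [hZdef, hu]; ring
  have hpos : 0 < u := by
    by_contra h
    push_neg at h
    have hd : (0:ℝ) < (2:ℝ) ^ (2 * k - 1) * π ^ (2 * k) / ((2 * k).factorial : ℝ) := by
      positivity
    have := mul_nonpos_of_nonneg_of_nonpos hd.le h
    rw [← hZu] at this
    linarith
  rw [← abs_of_pos hpos, hu, abs_mul, abs_pow, abs_neg, abs_one, one_pow, one_mul]

open Finset Filter Topology in
private theorem zeta_coeff {k : ℕ} (hk : 1 ≤ k) (x : ℝ) :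
    HasSum (fun j : ℕ => ((x / π) ^ 2 / ((j : ℝ) + 1) ^ 2) ^ k / (k : ℝ))
      ((2 ^ (2 * k - 1) * |(bernoulli (2 * k) : ℝ)| /
        ((k : ℝ) * (Nat.factorial (2 * k) : ℝ))) * x ^ (2 * k)) := by
  have hπ : (0:ℝ) < π := pi_pos
  have hZ := hasSum_zeta_nat (k := k) (by omega : k ≠ 0)
  set Z : ℝ := (-1 : ℝ) ^ (k + 1) * (2 : ℝ) ^ (2 * k - 1) * π ^ (2 * k) *
      (bernoulli (2 * k) : ℝ) / ((2 * k).factorial : ℝ) with hZdef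
  have hZ1 : HasSum (fun j : ℕ => 1 / ((j : ℝ) + 1) ^ (2 * k)) Z := by
    have hs : ∑ i ∈ Finset.range 1, 1 / (i : ℝ) ^ (2 * k) = 0 := by
      simp [zero_pow (show 2 * k ≠ 0 by omega)]
    have h : HasSum (fun j : ℕ => 1 / ((j + 1 : ℕ) : ℝ) ^ (2 * k)) Z := by
      refine (hasSum_nat_add_iff (f := fun n : ℕ => 1 / (n : ℝ) ^ (2 * k)) 1).2 ?_
      rw [hs, add_zero]
      exact hZ
    refine h.congr_fun ?_
    intro j
    push_cast
    ring_nf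
  have hc := hZ1.mul_left (x ^ (2 * k) / ((k : ℝ) * π ^ (2 * k)))
  have hkR : (0:ℝ) < (k:ℝ) := by exact_mod_cast hk
  have hfac : (0:ℝ) < ((2 * k).factorial : ℝ) := by positivity
  have hfun : (fun j : ℕ => ((x / π) ^ 2 / ((j : ℝ) + 1) ^ 2) ^ k / (k : ℝ))
      = fun j : ℕ => x ^ (2 * k) / ((k : ℝ) * π ^ (2 * k)) * (1 / ((j : ℝ) + 1) ^ (2 * k)) := by
    funext j
    have hj : ((j : ℝ) + 1) ≠ 0 := by positivity
    rw [div_pow, div_pow, div_pow, ← pow_mul, ← pow_mul, ← pow_mul]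
    field_simp
    try ring
    try tauto
  have hval : (2 ^ (2 * k - 1) * |(bernoulli (2 * k) : ℝ)| /
        ((k : ℝ) * (Nat.factorial (2 * k) : ℝ))) * x ^ (2 * k)
      = x ^ (2 * k) / ((k : ℝ) * π ^ (2 * k)) * Z := by
    rw [bern_abs hk, hZdef]
    have hπk : (π : ℝ) ^ (2 * k) ≠ 0 := by positivity
    field_simp
  rw [hfun, hval]
  exact hc

theorem partial_sum_bounds (n : ℕ) (hn : 1 ≤ n) (x : ℝ) (hx : x ∈ Set.Ioo (0 : ℝ) π) :
    Real.log (Real.sin x / x) <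
      -∑ k ∈ Finset.Icc 1 n,
        (2 ^ (2 * k - 1) * |(bernoulli (2 * k) : ℝ)| /
          ((k : ℝ) * (Nat.factorial (2 * k) : ℝ))) * x ^ (2 * k) ∧
    ∑ k ∈ Finset.Icc 1 n,
        ((2 ^ (2 * k) - 1) * |(bernoulli (2 * k) : ℝ)| /
          (2 * (k : ℝ) * (Nat.factorial (2 * k) : ℝ))) * x ^ (2 * k) <
      -Real.log (Real.cos (x / 2)) := by
  obtain ⟨hx0, hxπ⟩ := hx
  have hπ : (0:ℝ) < π := pi_pos
  have hx2 : x / 2 ∈ Set.Ioo (0 : ℝ) π := ⟨by linarith, by linarith⟩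
  -- r bounds
  have hr1 : ∀ j : ℕ, 0 < (x / π) ^ 2 / ((j : ℝ) + 1) ^ 2 := fun j => by positivity
  have hrle : ∀ z : ℝ, 0 < z → z < π → ∀ j : ℕ, (z / π) ^ 2 / ((j : ℝ) + 1) ^ 2 < 1 := by
    intro z hz0 hzπ j
    have h1 : (z / π) ^ 2 < 1 := by
      have : z / π < 1 := (div_lt_one hπ).2 hzπ
      have h0 : 0 < z / π := div_pos hz0 hπ
      nlinarith
    have h2 : (1:ℝ) ≤ ((j : ℝ) + 1) ^ 2 := by
      have : (0:ℝ) ≤ (j:ℝ) := j.cast_nonneg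
      nlinarith
    calc (z / π) ^ 2 / ((j : ℝ) + 1) ^ 2 ≤ (z / π) ^ 2 := by
          apply div_le_self (by positivity) h2
      _ < 1 := h1
  have hr1lt : ∀ j : ℕ, (x / π) ^ 2 / ((j : ℝ) + 1) ^ 2 < 1 := hrle x hx0 hxπ
  have hr2pos : ∀ j : ℕ, 0 < (x / 2 / π) ^ 2 / ((j : ℝ) + 1) ^ 2 := fun j => by positivity
  have hr2lt : ∀ j : ℕ, (x / 2 / π) ^ 2 / ((j : ℝ) + 1) ^ 2 < 1 := hrle _ hx2.1 hx2.2
  have hr21 : ∀ j : ℕ, (x / 2 / π) ^ 2 / ((j : ℝ) + 1) ^ 2 < (x / π) ^ 2 / ((j : ℝ) + 1) ^ 2 := by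
    intro j
    have h : (x / 2 / π) ^ 2 < (x / π) ^ 2 := by
      apply pow_lt_pow_left₀ _ (by positivity)
      · omega
      · rw [div_lt_div_iff₀ hπ hπ]
        nlinarith
    exact div_lt_div_of_pos_right h (by positivity)
  -- HasSums
  have hE₁ := euler_log ⟨hx0, hxπ⟩
  have hE₂ := euler_log hx2
  have hP₁ : HasSum (fun j : ℕ => ∑ k ∈ Finset.Icc 1 n,
        ((x / π) ^ 2 / ((j : ℝ) + 1) ^ 2) ^ k / (k : ℝ))
      (∑ k ∈ Finset.Icc 1 n, (2 ^ (2 * k - 1) * |(bernoulli (2 * k) : ℝ)| /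
          ((k : ℝ) * (Nat.factorial (2 * k) : ℝ))) * x ^ (2 * k)) :=
    hasSum_sum fun k hk => zeta_coeff (Finset.mem_Icc.1 hk).1 x
  have hP₂ : HasSum (fun j : ℕ => ∑ k ∈ Finset.Icc 1 n,
        ((x / 2 / π) ^ 2 / ((j : ℝ) + 1) ^ 2) ^ k / (k : ℝ))
      (∑ k ∈ Finset.Icc 1 n, (2 ^ (2 * k - 1) * |(bernoulli (2 * k) : ℝ)| /
          ((k : ℝ) * (Nat.factorial (2 * k) : ℝ))) * (x / 2) ^ (2 * k)) :=
    hasSum_sum fun k hk => zeta_coeff (Finset.mem_Icc.1 hk).1 (x / 2)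
  -- Part 1
  have part1 : (∑ k ∈ Finset.Icc 1 n, (2 ^ (2 * k - 1) * |(bernoulli (2 * k) : ℝ)| /
          ((k : ℝ) * (Nat.factorial (2 * k) : ℝ))) * x ^ (2 * k))
      < -Real.log (Real.sin x / x) := by
    refine hasSum_lt (i := 0) (fun j => ?_) ?_ hP₁ hE₁
    · exact (Tpos n (hr1 j) (hr1lt j)).le
    · exact Tpos n (hr1 0) (hr1lt 0)
  -- Part 2 strict sum inequality
  have part2 : (∑ k ∈ Finset.Icc 1 n, (2 ^ (2 * k - 1) * |(bernoulli (2 * k) : ℝ)| /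
          ((k : ℝ) * (Nat.factorial (2 * k) : ℝ))) * x ^ (2 * k))
        + (-Real.log (Real.sin (x / 2) / (x / 2)))
      < (-Real.log (Real.sin x / x))
        + (∑ k ∈ Finset.Icc 1 n, (2 ^ (2 * k - 1) * |(bernoulli (2 * k) : ℝ)| /
          ((k : ℝ) * (Nat.factorial (2 * k) : ℝ))) * (x / 2) ^ (2 * k)) := by
    refine hasSum_lt (i := 0) (fun j => ?_) ?_ (hP₁.add hE₂) (hE₁.add hP₂)
    · have := Tmono n (hr2pos j).le (hr21 j) (hr1lt j)
      simp only
      linarith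
    · have := Tmono n (hr2pos 0).le (hr21 0) (hr1lt 0)
      linarith
  -- log identity
  have hs2 : 0 < Real.sin (x / 2) := Real.sin_pos_of_pos_of_lt_pi hx2.1 hx2.2
  have hc2 : 0 < Real.cos (x / 2) := by
    apply Real.cos_pos_of_mem_Ioo
    constructor <;> [linarith; linarith]
  have hsinx : Real.sin x / x = Real.sin (x / 2) / (x / 2) * Real.cos (x / 2) := by
    have h2 : Real.sin x = 2 * Real.sin (x / 2) * Real.cos (x / 2) := by
      have := Real.sin_two_mul (x / 2)
      rw [show 2 * (x / 2) = x by ring] at this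
      linarith
    rw [h2]
    field_simp
    try ring
    try tauto
  have hlogid : Real.log (Real.sin x / x)
      = Real.log (Real.sin (x / 2) / (x / 2)) + Real.log (Real.cos (x / 2)) := by
    rw [hsinx, Real.log_mul (by positivity) (ne_of_gt hc2)]
  -- coefficient identity
  have hcoeff : ∑ k ∈ Finset.Icc 1 n,
        ((2 ^ (2 * k) - 1) * |(bernoulli (2 * k) : ℝ)| /
          (2 * (k : ℝ) * (Nat.factorial (2 * k) : ℝ))) * x ^ (2 * k)
      = (∑ k ∈ Finset.Icc 1 n, (2 ^ (2 * k - 1) * |(bernoulli (2 * k) : ℝ)| /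
          ((k : ℝ) * (Nat.factorial (2 * k) : ℝ))) * x ^ (2 * k))
        - (∑ k ∈ Finset.Icc 1 n, (2 ^ (2 * k - 1) * |(bernoulli (2 * k) : ℝ)| /
          ((k : ℝ) * (Nat.factorial (2 * k) : ℝ))) * (x / 2) ^ (2 * k)) := by
    rw [← Finset.sum_sub_distrib]
    refine Finset.sum_congr rfl fun k hk => ?_
    have hk1 : 1 ≤ k := (Finset.mem_Icc.1 hk).1
    have hkR : (0:ℝ) < (k:ℝ) := by exact_mod_cast hk1
    have hfac : (0:ℝ) < ((2 * k).factorial : ℝ) := by positivity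
    have h2k : (2:ℝ) ^ (2 * k) = 2 * 2 ^ (2 * k - 1) := by
      conv_lhs => rw [show 2 * k = (2 * k - 1) + 1 by omega]
      rw [pow_succ]
      ring
    have hxk : (x / 2) ^ (2 * k) = x ^ (2 * k) / 2 ^ (2 * k) := div_pow x 2 (2 * k)
    rw [hxk, h2k]
    have h2pow : (0:ℝ) < 2 ^ (2 * k - 1) := by positivity
    field_simp
  constructor
  · linarith
  · rw [hlogid] at part2
    linarith
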